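/- The function q̄(λ) = (−λ + √(λ² + 2 − 2λ))/(2 − 2λ) defined on [0,1) is strictly decreasing in λ, satisfies q̄(0) = √2/2, and q̄(1/4) = 2/3. -/
import Mathlib


noncomputable def qbar (l : ℝ) : ℝ := (-l + Real.sqrt (l ^ 2 + 2 - 2 * l)) / (2 * (1 - l))

/-- q̄(λ) is strictly decreasing on [0,1), q̄(0) = √2/2, and q̄(1/4) = 2/3. -/
theorem stmt_7 :
    StrictAntiOn qbar (Set.Ico 0 1) ∧ qbar 0 = Real.sqrt 2 / 2 ∧
    qbar (1 / 4) = 2 / 3 := by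
  refine ⟨?_, ?_, ?_⟩
  · intro a ha b hb hab
    obtain ⟨ha0, ha1⟩ := ha
    obtain ⟨hb0, hb1⟩ := hb
    set sa := Real.sqrt (a ^ 2 + 2 - 2 * a) with hsa
    set sb := Real.sqrt (b ^ 2 + 2 - 2 * b) with hsb
    have hsa2 : sa ^ 2 = a ^ 2 + 2 - 2 * a := Real.sq_sqrt (by nlinarith)
    have hsb2 : sb ^ 2 = b ^ 2 + 2 - 2 * b := Real.sq_sqrt (by nlinarith)
    have hsapos : 0 < sa := Real.sqrt_pos.2 (by nlinarith)
    have hsbpos : 0 < sb := Real.sqrt_pos.2 (by nlinarith)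
    have hda : (0:ℝ) < 2 * (1 - a) := by linarith
    have hdb : (0:ℝ) < 2 * (1 - b) := by linarith
    unfold qbar
    rw [← hsa, ← hsb, div_lt_div_iff₀ hdb hda]
    have hsa1 : 1 < sa := by nlinarith
    have hsb1 : 1 < sb := by nlinarith
    have key : (1 - b) * sa < (1 - a) * sb := by
      have h1 : ((1 - b) * sa) ^ 2 < ((1 - a) * sb) ^ 2 := by nlinarith
      exact lt_of_pow_lt_pow_left₀ 2 (mul_nonneg (by linarith) hsbpos.le) h1
    have h2 : (1 - b) * (sa + 1) < (1 - a) * (sb + 1) := by nlinarith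
    have h3 : ((1 - a) * (1 - b)) * ((1 - b) * (sa + 1)) <
        ((1 - a) * (1 - b)) * ((1 - a) * (sb + 1)) := by
      apply mul_lt_mul_of_pos_left h2
      nlinarith
    have e1 : ((1 - a) * (sb - 1)) * ((sa + 1) * (sb + 1))
        = ((1 - a) * (1 - b)) * ((1 - b) * (sa + 1)) := by
      linear_combination (1 - a) * (sa + 1) * hsb2
    have e2 : ((1 - b) * (sa - 1)) * ((sa + 1) * (sb + 1))
        = ((1 - a) * (1 - b)) * ((1 - a) * (sb + 1)) := by
      linear_combination (1 - b) * (sb + 1) * hsa2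
    have h4 : ((1 - a) * (sb - 1)) * ((sa + 1) * (sb + 1)) <
        ((1 - b) * (sa - 1)) * ((sa + 1) * (sb + 1)) := by
      rw [e1, e2]; exact h3
    have h5 : (1 - a) * (sb - 1) < (1 - b) * (sa - 1) :=
      lt_of_mul_lt_mul_right h4 (by positivity)
    nlinarith [h5]
  · unfold qbar
    norm_num
  · unfold qbar
    have : Real.sqrt ((1/4:ℝ) ^ 2 + 2 - 2 * (1/4)) = 5/4 := by
      rw [show (1/4:ℝ) ^ 2 + 2 - 2 * (1/4) = (5/4)^2 by norm_num,
        Real.sqrt_sq (by norm_num)]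
    rw [this]; norm_num
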